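/- arXiv:1311.6056 — 7 statements merged into one kernel-verified Lean document; each statement's English description precedes it below -/
import Mathlib

section
/- The equation p^m - q^n = 1, where p and q are primes and m, n > 1, has only one solution, namely 3^2 - 2^3 = 1. -/
/-!
Parity forces one of `p`, `q` to be `2`, and the other one is odd. For odd `x`, `y` and an odd
exponent `n`, the quotient `(x ^ n - y ^ n) / (x - y)` is odd, so if `x ^ n - y ^ n` is a power
of two it equals `x - y`; applied with `y = ±1` this rules out an odd exponent on the odd prime.
An even exponent is handled directly: `s ^ 2 + 1` is `2` mod `4`, and if `s ^ 2 = 2 ^ n + 1`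
then `s - 1` and `s + 1` are powers of two differing by `2`, so `s = 3`.
-/

theorem Int.sub_eq_two_pow_of_pow_sub_pow_eq_two_pow {x y : ℤ} {n k : ℕ} (hx : Odd x)
    (hy : Odd y) (hn : Odd n) (h : x ^ n - y ^ n = 2 ^ k) : x - y = 2 ^ k := by
  have hyx : y < x := hn.strictMono_pow.lt_iff_lt.mp (by linarith [pow_pos (two_pos (α := ℤ)) k])
  obtain ⟨j, -, hj⟩ := (dvd_prime_pow Int.prime_two k).mp (h ▸ sub_dvd_pow_sub_pow x y n)
  have hxy : x - y = 2 ^ j := by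
    rcases Int.associated_iff.mp hj with hj | hj
    · exact hj
    · linarith [pow_pos (two_pos (α := ℤ)) j]
  have hval := emultiplicity_pow_sub_pow_of_prime Int.prime_two
    (even_iff_two_dvd.mp (hx.sub_odd hy)) (by rwa [← even_iff_two_dvd, Int.not_even_iff_odd])
    (n := n) (by exact_mod_cast hn.not_two_dvd_nat)
  rw [h, hxy, emultiplicity_pow_self_of_prime Int.prime_two,
    emultiplicity_pow_self_of_prime Int.prime_two, Nat.cast_inj] at hval
  rw [hxy, hval]

theorem Nat.sq_add_one_ne_two_pow (s : ℕ) {m : ℕ} (hm : 2 ≤ m) : s ^ 2 + 1 ≠ 2 ^ m := by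
  intro h
  have h4 : ((2 ^ m : ℕ) : ZMod 4) = 0 := by
    rw [ZMod.natCast_eq_zero_iff]
    exact (pow_dvd_pow 2 hm : 2 ^ 2 ∣ 2 ^ m)
  rw [← h] at h4
  push_cast at h4
  generalize (s : ZMod 4) = t at h4
  revert t; decide

theorem Nat.eq_three_of_sq_eq_two_pow_add_one {s n : ℕ} (h : s ^ 2 = 2 ^ n + 1) : s = 3 := by
  have hn : n ≠ 0 := by
    rintro rfl
    have : s ≤ 1 := by nlinarith
    interval_cases s <;> simp at h
  have hs_odd : Odd s := by
    rw [← Nat.odd_pow_iff two_ne_zero, h, Nat.odd_add_one, Nat.not_odd_iff_even]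
    exact (Nat.even_pow' hn).mpr even_two
  have hfac : (s + 1) * (s - 1) = 2 ^ n := by
    rw [← Nat.sq_sub_sq, h, one_pow, Nat.add_sub_cancel]
  obtain ⟨a, -, ha⟩ := (Nat.dvd_prime_pow Nat.prime_two).mp (Dvd.intro_left _ hfac)
  obtain ⟨b, -, hb⟩ := (Nat.dvd_prime_pow Nat.prime_two).mp (Dvd.intro _ hfac)
  have hab : s - 1 ∣ s + 1 := by
    have hle : 2 ^ a ≤ 2 ^ b := by omega
    rw [ha, hb]
    exact Nat.pow_dvd_pow 2 ((Nat.pow_le_pow_iff_right one_lt_two).mp hle)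
  have h2 : s - 1 ∣ 2 := by
    have := Nat.dvd_sub hab dvd_rfl
    rwa [show s + 1 - (s - 1) = 2 by have := hs_odd.pos; omega] at this
  have hs_le : s - 1 ≤ 2 := Nat.le_of_dvd two_pos h2
  have hs_ne : s ≠ 1 := by rintro rfl; simp at h
  obtain ⟨t, rfl⟩ := hs_odd
  omega

theorem Nat.even_iff_odd_of_pow_eq_pow_add_one {a b m n : ℕ} (hm : m ≠ 0) (hn : n ≠ 0)
    (h : a ^ m = b ^ n + 1) : Even a ↔ Odd b := by
  rw [← Nat.even_pow' hm, h, Nat.even_add_one, Nat.not_even_iff_odd, Nat.odd_pow_iff hn]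

theorem Nat.eq_one_of_pow_eq_two_pow_add_one {p m n : ℕ} (hp : 1 < p) (hp_odd : Odd p)
    (hm : Odd m) (h : p ^ m = 2 ^ n + 1) : m = 1 := by
  have hZ : (p : ℤ) ^ m = 2 ^ n + 1 := by exact_mod_cast h
  have hsub : (p : ℤ) - 1 = 2 ^ n := Int.sub_eq_two_pow_of_pow_sub_pow_eq_two_pow
    (by exact_mod_cast hp_odd) odd_one hm (by rw [one_pow, hZ]; ring)
  have hpow : p ^ m = p ^ 1 := by rw [pow_one]; exact_mod_cast (by linarith : (p : ℤ) ^ m = p)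
  exact Nat.pow_right_injective hp hpow

theorem Nat.two_pow_ne_pow_add_one {q m n : ℕ} (hq : 1 < q) (hq_odd : Odd q) (hm : 2 ≤ m)
    (hn : 2 ≤ n) : 2 ^ m ≠ q ^ n + 1 := by
  intro h
  rcases Nat.even_or_odd n with ⟨k, rfl⟩ | hn_odd
  · exact Nat.sq_add_one_ne_two_pow (q ^ k) hm (by rw [← pow_mul, mul_two, h])
  · have hZ : (2 : ℤ) ^ m = q ^ n + 1 := by exact_mod_cast h
    have hsub : (q : ℤ) - -1 = 2 ^ m := Int.sub_eq_two_pow_of_pow_sub_pow_eq_two_pow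
      (by exact_mod_cast hq_odd) (by decide) hn_odd (by rw [hn_odd.neg_one_pow, hZ]; ring)
    have hpow : q ^ n = q ^ 1 := by rw [pow_one]; exact_mod_cast (by linarith : (q : ℤ) ^ n = q)
    have := Nat.pow_right_injective hq hpow
    omega

/-- The equation p^m - q^n = 1, where p and q are primes and m, n > 1,
has only one solution, namely 3^2 - 2^3 = 1. -/
theorem catalan_prime_powers (p q m n : ℕ) (hp : p.Prime) (hq : q.Prime)
    (hm : 1 < m) (hn : 1 < n) (h : p ^ m = q ^ n + 1) :
    p = 3 ∧ m = 2 ∧ q = 2 ∧ n = 3 := by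
  have hparity := Nat.even_iff_odd_of_pow_eq_pow_add_one (by omega) (by omega) h
  by_cases hp_even : Even p
  · obtain rfl : p = 2 := hp.even_iff.mp hp_even
    exact absurd h (Nat.two_pow_ne_pow_add_one hq.one_lt (hparity.mp hp_even) hm hn)
  obtain rfl : q = 2 := hq.even_iff.mp (Nat.not_odd_iff_even.mp (mt hparity.mpr hp_even))
  have hp_odd : Odd p := Nat.not_even_iff_odd.mp hp_even
  obtain ⟨k, rfl⟩ : Even m := by
    by_contra hm_odd
    have := Nat.eq_one_of_pow_eq_two_pow_add_one hp.one_lt hp_odd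
      (Nat.not_even_iff_odd.mp hm_odd) h
    omega
  have hpk : p ^ k = 3 := Nat.eq_three_of_sq_eq_two_pow_add_one (by rw [← pow_mul, mul_two, h])
  obtain ⟨rfl, rfl⟩ := Nat.prime_three.pow_eq_iff.mp hpk
  refine ⟨rfl, rfl, rfl, Nat.pow_right_injective le_rfl (?_ : 2 ^ n = 2 ^ 3)⟩
  omega
end

section
/- If q is a prime power with 3 dividing q + 1 and the set of prime divisors of q^2 - q - 8 is contained in {2, 3}, then 9 does not divide q^2 - q - 8, hence q^2 - q - 8 = 3·2^t for some natural number t. -/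
/-- If q is a prime power with 3 ∣ q + 1 and every prime divisor of
q^2 - q - 8 lies in {2, 3}, then 9 ∤ q^2 - q - 8 and q^2 - q - 8 = 3·2^t
for some natural number t. -/
theorem q_sq_sub_q_sub_eight (q : ℕ) (hq : IsPrimePow q) (h3 : 3 ∣ q + 1)
    (h : ∀ r : ℕ, r.Prime → r ∣ q ^ 2 - q - 8 → r = 2 ∨ r = 3) :
    ¬ (9 ∣ q ^ 2 - q - 8) ∧ ∃ t : ℕ, q ^ 2 - q - 8 = 3 * 2 ^ t := by
  have hn0 : q ^ 2 - q - 8 ≠ 0 := by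
    intro h0
    rcases h 5 (by norm_num) (h0 ▸ dvd_zero 5) with h5 | h5 <;> norm_num at h5
  have hq4 : 4 ≤ q := by
    by_contra hlt
    push_neg at hlt
    interval_cases q <;> simp_all
  obtain ⟨k, hk⟩ := h3
  obtain ⟨m, hm⟩ : ∃ m, q = 3 * m + 2 := ⟨k - 1, by omega⟩
  have hsq : q ^ 2 = 9 * (m * m) + 12 * m + 4 := by subst hm; ring
  have hm1 : 1 ≤ m := by omega
  have hn : q ^ 2 - q - 8 = 9 * (m * m) + 9 * m - 6 := by omega
  have h9 : ¬ (9 ∣ q ^ 2 - q - 8) := by omega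
  refine ⟨h9, ?_⟩
  have h3n : 3 ∣ q ^ 2 - q - 8 := by omega
  obtain ⟨m2, hm2⟩ := h3n
  have hm2ne : m2 ≠ 0 := by omega
  have h3m2 : ¬ 3 ∣ m2 := by
    intro ⟨c, hc⟩
    apply h9
    exact ⟨c, by omega⟩
  rcases Nat.eq_two_pow_or_exists_odd_prime_and_dvd m2 with ⟨t, ht⟩ | ⟨p, hp, hpd, hpo⟩
  · exact ⟨t, by omega⟩
  · rcases h p hp (hm2 ▸ Dvd.dvd.mul_left hpd 3) with rfl | rfl
    · exact absurd hpo (by norm_num)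
    · exact absurd hpd h3m2
end

section
/- There are no natural numbers q', q with q', q ≥ 2 prime powers, gcd(3, q'+1) = 1, gcd(3, q+1) = 3, such that q'^2 - q' + 1 = (q^2 - q + 1)/3, q' divides q + 1, and q' > 5. More precisely, if 3q'(q'-1) = (q+1)(q-2) and q' divides q+1, then writing q+1 = q'·a one gets q' = 3(a-1)/(a^2-3), which forces q' ≤ 5. -/
lemma key (q q' a : ℕ) (hq : 2 ≤ q) (hq' : 2 ≤ q')
    (heq : 3 * q' * (q' - 1) = (q + 1) * (q - 2)) (ha : q + 1 = q' * a) : q' ≤ 5 := by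
  by_contra h
  push_neg at h
  have ha1 : 1 ≤ a := by
    rcases Nat.eq_zero_or_pos a with h0 | h0
    · subst h0; simp at ha
    · exact h0
  zify [show 1 ≤ q' by omega, hq] at heq
  have haz : (q : ℤ) + 1 = (q' : ℤ) * a := by exact_mod_cast ha
  have hq'z : (6 : ℤ) ≤ q' := by exact_mod_cast h
  have hqz : (2 : ℤ) ≤ q := by exact_mod_cast hq
  have haz1 : (1 : ℤ) ≤ a := by exact_mod_cast ha1
  rcases lt_or_ge a 3 with h3 | h3
  · interval_cases a <;> nlinarith [heq, haz, hq'z, hqz]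
  · have h3z : (3 : ℤ) ≤ a := by exact_mod_cast h3
    have hne : (q' : ℤ) ≠ 0 := by linarith
    have h2 : (q' : ℤ) * (3 * ((q':ℤ) - 1)) = (q' : ℤ) * ((a:ℤ) * ((q':ℤ) * a - 3)) := by
      linear_combination heq + ((q:ℤ) - 2) * haz + (q':ℤ) * (a:ℤ) * haz
    have hc := mul_left_cancel₀ hne h2
    nlinarith [hc, mul_nonneg (show (0:ℤ) ≤ (q':ℤ) - 6 by linarith) (show (0:ℤ) ≤ (a:ℤ)*a - 3 by nlinarith), mul_nonneg (show (0:ℤ) ≤ (a:ℤ) - 3 by linarith) (show (0:ℤ) ≤ (a:ℤ) by linarith)]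

/-- There are no prime powers q, q' ≥ 2 with gcd(3, q'+1) = 1, gcd(3, q+1) = 3,
q'^2 - q' + 1 = (q^2 - q + 1)/3, q' ∣ q + 1 and q' > 5.  More precisely, if
3q'(q'-1) = (q+1)(q-2) and q + 1 = q'·a, then q' ≤ 5. -/
theorem no_large_q'_dividing_q_add_one :
    (¬ ∃ q q' : ℕ, 2 ≤ q ∧ 2 ≤ q' ∧ IsPrimePow q ∧ IsPrimePow q' ∧
      Nat.gcd 3 (q' + 1) = 1 ∧ Nat.gcd 3 (q + 1) = 3 ∧
      3 * (q' ^ 2 - q' + 1) = q ^ 2 - q + 1 ∧ q' ∣ q + 1 ∧ 5 < q') ∧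
    (∀ q q' a : ℕ, 2 ≤ q → 2 ≤ q' →
      3 * q' * (q' - 1) = (q + 1) * (q - 2) → q + 1 = q' * a → q' ≤ 5) := by
  constructor
  · rintro ⟨q, q', hq, hq', -, -, -, -, heq, hdvd, h5⟩
    obtain ⟨a, ha⟩ := hdvd
    have heq' : 3 * q' * (q' - 1) = (q + 1) * (q - 2) := by
      have h1 : q' ≤ q' ^ 2 := by nlinarith
      have h2 : q ≤ q ^ 2 := by nlinarith
      zify [h1, h2, show 1 ≤ q' by omega, hq] at heq ⊢
      ring_nf
      ring_nf at heq
      linarith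
    have := key q q' a hq hq' heq' ha
    omega
  · exact fun q q' a hq hq' heq ha => key q q' a hq hq' heq ha
end

section
/- If q and q' are natural numbers ≥ 2 with q'^k - 1 = q·t₀ for some natural number t₀ ≥ 1, and q'·t₀·(q·t₀ + 2) = (q - 1)(q' + 1), then t₀ = 1 and q = 3q' + 1. -/
/-- If q, q' ≥ 2, t₀ ≥ 1, q'^k - 1 = q·t₀ and q'·t₀·(q·t₀ + 2) = (q-1)(q'+1),
then t₀ = 1 and q = 3q' + 1. -/
theorem t0_eq_one_and_q_eq (q q' t₀ k : ℕ) (hq : 2 ≤ q) (hq' : 2 ≤ q')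
    (ht₀ : 1 ≤ t₀) (hk : 1 ≤ k) (h1 : q' ^ k = q * t₀ + 1)
    (h2 : q' * t₀ * (q * t₀ + 2) = (q - 1) * (q' + 1)) :
    t₀ = 1 ∧ q = 3 * q' + 1 := by
  obtain ⟨p, rfl⟩ : ∃ p, q = p + 2 := ⟨q - 2, by omega⟩
  obtain ⟨r, rfl⟩ : ∃ r, q' = r + 2 := ⟨q' - 2, by omega⟩
  obtain ⟨s, rfl⟩ : ∃ s, t₀ = s + 1 := ⟨t₀ - 1, by omega⟩
  have h2' : (r + 2) * (s + 1) * ((p + 2) * (s + 1) + 2) = (p + 1) * (r + 3) := by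
    convert h2 using 2 <;> omega
  have hs : s = 0 := by
    by_contra h
    have h2s : 2 ≤ s + 1 := by omega
    have key : (r + 2) * 2 * ((p + 2) * 2 + 2) ≤ (r + 2) * (s + 1) * ((p + 2) * (s + 1) + 2) := by
      apply Nat.mul_le_mul
      · exact Nat.mul_le_mul_left _ h2s
      · have := Nat.mul_le_mul_left (p + 2) h2s
        omega
    rw [h2'] at key
    nlinarith [key]
  subst hs
  constructor
  · rfl
  · nlinarith
end

section
/- There are no natural numbers m ≥ 1 and prime power q > 3 such that q(q - 1) = 3^(m+1)·(3^m - 1). -/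
/-!
If `3 ∣ q`, then `q = 3 ^ k` and both sides of `q (q - 1) = 3 ^ (m + 1) (3 ^ m - 1)` are a power
of `3` times a cofactor prime to `3`; comparing them forces `k = m + 1` and then
`3 ^ (m + 1) - 1 = 3 ^ m - 1`, which is absurd. If `3 ∤ q`, then `3 ^ (m + 1) ∣ q - 1`, so
`q > 3 ^ (m + 1)` and the left side exceeds the right.
-/

theorem Nat.coprime_pow_sub_one {p n : ℕ} (hp : p ≠ 0) (hn : n ≠ 0) :
    Nat.Coprime p (p ^ n - 1) := by
  obtain ⟨k, hk⟩ := Nat.exists_eq_succ_of_ne_zero (pow_ne_zero n hp)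
  have hpow : Nat.Coprime (p ^ n) (p ^ n - 1) := by simp [hk]
  exact hpow.coprime_dvd_left (dvd_pow_self p hn)

theorem IsPrimePow.eq_pow_of_prime_dvd {p q : ℕ} (hp : p.Prime) (hq : IsPrimePow q)
    (hpq : p ∣ q) : ∃ k, k ≠ 0 ∧ q = p ^ k := by
  obtain ⟨r, k, hr, hk, rfl⟩ := hq
  have hpr : p = r :=
    (Nat.prime_dvd_prime_iff_eq hp (Nat.prime_iff.mpr hr)).mp (hp.dvd_of_dvd_pow hpq)
  exact ⟨k, hk.ne', by rw [hpr]⟩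

theorem Nat.le_of_pow_mul_eq_pow_mul {p a b u v : ℕ} (hp : 1 < p) (hv : Nat.Coprime p v)
    (h : p ^ a * u = p ^ b * v) : a ≤ b :=
  (Nat.pow_dvd_pow_iff_le_right hp).mp <|
    (hv.pow_left a).dvd_of_dvd_mul_right (h ▸ dvd_mul_right _ _)

theorem Nat.lt_of_mul_sub_one_eq_mul {q n c : ℕ} (hq : 1 < q) (hnq : Nat.Coprime n q)
    (h : q * (q - 1) = n * c) : n < c := by
  obtain ⟨t, ht⟩ : n ∣ q - 1 := hnq.dvd_of_dvd_mul_left ⟨c, h⟩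
  have ht0 : 0 < t := Nat.pos_of_ne_zero <| by rintro rfl; omega
  have hn0 : 0 < n := Nat.pos_of_ne_zero <| by rintro rfl; omega
  have hc : c = q * t := Nat.eq_of_mul_eq_mul_left hn0 <| by rw [← h, ht]; ring
  calc n ≤ q - 1 := ht ▸ Nat.le_mul_of_pos_right n ht0
    _ < q := by omega
    _ ≤ c := hc ▸ Nat.le_mul_of_pos_right q ht0

/-- There are no m ≥ 1 and prime power q > 3 with q(q-1) = 3^(m+1)·(3^m - 1). -/
theorem no_ree_coincidence :
    ¬ ∃ m q : ℕ, 1 ≤ m ∧ IsPrimePow q ∧ 3 < q ∧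
      q * (q - 1) = 3 ^ (m + 1) * (3 ^ m - 1) := by
  rintro ⟨m, q, hm, hq, -, heq⟩
  have hpow_succ : 3 ^ (m + 1) = 3 ^ m * 3 := pow_succ 3 m
  have hpow_pos : 0 < 3 ^ m := by positivity
  by_cases h3q : 3 ∣ q
  · obtain ⟨k, hk, rfl⟩ := hq.eq_pow_of_prime_dvd Nat.prime_three h3q
    have h3k : Nat.Coprime 3 (3 ^ k - 1) := Nat.coprime_pow_sub_one three_ne_zero hk
    have h3m : Nat.Coprime 3 (3 ^ m - 1) := Nat.coprime_pow_sub_one three_ne_zero (by omega)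
    obtain rfl : k = m + 1 := le_antisymm
      (Nat.le_of_pow_mul_eq_pow_mul (by norm_num) h3m heq)
      (Nat.le_of_pow_mul_eq_pow_mul (by norm_num) h3k heq.symm)
    have hcofactor : 3 ^ (m + 1) - 1 = 3 ^ m - 1 := Nat.eq_of_mul_eq_mul_left (by positivity) heq
    omega
  · have h3q' : Nat.Coprime (3 ^ (m + 1)) q :=
      ((Nat.Prime.coprime_iff_not_dvd Nat.prime_three).mpr h3q).pow_left _
    have hlt : 3 ^ (m + 1) < 3 ^ m - 1 := Nat.lt_of_mul_sub_one_eq_mul hq.one_lt h3q' heq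
    omega
end

section
/- There is no even natural number q ≥ 4 and odd natural number q' ≥ 3 satisfying q(q - 1) = q'^2(q'^4 + 1)(q'^2 - 1): if q | 2(q'^2 - 1) then q'^2(q'^4+1)/2 ≤ q - 1 ≤ 2(q'^2-1) - 1, a contradiction; and if 2(q'^4 + 1) = q·u for some u ≥ 1, then substituting yields q'^2((4 - u^2)q'^2 + u^2) = 2u - 4, which has no solution. -/
/-- There is no even natural number q ≥ 4 and odd natural number q' ≥ 3 with
q(q-1) = q'^2(q'^4+1)(q'^2-1). -/
theorem no_even_odd_E8_coincidence :
    ¬ ∃ q q' : ℕ, Even q ∧ 4 ≤ q ∧ Odd q' ∧ 3 ≤ q' ∧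
      q * (q - 1) = q' ^ 2 * (q' ^ 4 + 1) * (q' ^ 2 - 1) := by
  rintro ⟨q, q', -, hq, -, hq', heq⟩
  obtain ⟨m, rfl⟩ : ∃ m, q = m + 4 := ⟨q - 4, by omega⟩
  obtain ⟨n, rfl⟩ : ∃ n, q' = n + 3 := ⟨q' - 3, by omega⟩
  have h1 : (m + 4) - 1 = m + 3 := by omega
  have h2 : (n + 3) ^ 2 - 1 = n ^ 2 + 6 * n + 8 := by
    have : (n + 3) ^ 2 = n ^ 2 + 6 * n + 9 := by ring
    omega
  rw [h1, h2] at heq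
  set s := 2 * m + 7 with hs
  set A := 2 * n ^ 4 + 24 * n ^ 3 + 107 * n ^ 2 + 210 * n + 153 with hA
  have key : s ^ 2 = 4 * ((n + 3) ^ 2 * ((n + 3) ^ 4 + 1) * (n ^ 2 + 6 * n + 8)) + 1 := by
    rw [← heq]; ring
  have h3 : s ^ 2 = A ^ 2 + (3 * n ^ 4 + 36 * n ^ 3 + 158 * n ^ 2 + 300 * n + 208) := by
    rw [key, hA]; ring
  have h4 : (A + 1) ^ 2 = s ^ 2 + (n ^ 4 + 12 * n ^ 3 + 56 * n ^ 2 + 120 * n + 99) := by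
    rw [key, hA]; ring
  have hlt1 : A ^ 2 < s ^ 2 := by omega
  have hlt2 : s ^ 2 < (A + 1) ^ 2 := by omega
  have hAs : A < s := by
    by_contra h
    have : s ^ 2 ≤ A ^ 2 := Nat.pow_le_pow_left (by omega) 2
    omega
  have hsA : s < A + 1 := by
    by_contra h
    have : (A + 1) ^ 2 ≤ s ^ 2 := Nat.pow_le_pow_left (by omega) 2
    omega
  omega
end

section
/- If q₀ ≥ 2 is a natural number with q₀ - 1 = 2^δ for some natural number δ ≥ 1 and q₀ is a power of 3, then q₀ = 3 or q₀ = 9. -/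
/-- If q₀ ≥ 2 is a power of 3 and q₀ - 1 = 2^δ for some δ ≥ 1,
then q₀ = 3 or q₀ = 9. -/
theorem power_of_three_sub_one_power_of_two (q₀ : ℕ) (hq : 2 ≤ q₀)
    (h3 : ∃ k : ℕ, q₀ = 3 ^ k) (h2 : ∃ δ : ℕ, 1 ≤ δ ∧ q₀ - 1 = 2 ^ δ) :
    q₀ = 3 ∨ q₀ = 9 := by
  obtain ⟨k, rfl⟩ := h3
  obtain ⟨δ, hδ1, hδ⟩ := h2
  match k, hq, hδ with
  | 0, hq, _ => simp at hq
  | 1, _, _ => left; norm_num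
  | 2, _, _ => right; norm_num
  | (n+3), hq, hδ =>
    exfalso
    have h27 : 27 ≤ 3 ^ (n + 3) := by
      calc (27:ℕ) = 3 ^ 3 := by norm_num
      _ ≤ 3 ^ (n + 3) := Nat.pow_le_pow_right (by norm_num) (by omega)
    have hδ5 : 5 ≤ δ := by
      by_contra h
      interval_cases δ <;> omega
    have h8 : (8:ℕ) ∣ 2 ^ δ := by
      have : (2:ℕ) ^ 3 ∣ 2 ^ δ := pow_dvd_pow 2 (by omega)
      simpa using this
    have h8' : (8:ℕ) ∣ 3 ^ (n + 3) - 1 := hδ ▸ h8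
    rcases Nat.even_or_odd (n + 3) with he | ho
    · -- even case: n + 3 = 2 * m
      obtain ⟨m, hm⟩ := he
      have hm2 : 2 ≤ m := by
        rcases Nat.lt_or_ge m 2 with h | h
        · interval_cases m <;> omega
        · exact h
      have ha : 9 ≤ 3 ^ m := by
        calc (9:ℕ) = 3 ^ 2 := by norm_num
        _ ≤ 3 ^ m := Nat.pow_le_pow_right (by norm_num) hm2
      obtain ⟨b, hb⟩ : ∃ b, 3 ^ m = b + 1 := ⟨3 ^ m - 1, by omega⟩
      have hfac : 2 ^ δ = b * (b + 2) := by
        have h1 : 3 ^ (n + 3) = (3 ^ m) * (3 ^ m) := by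
          rw [hm, ← pow_add]
        rw [← hδ, h1, hb]
        have : (b + 1) * (b + 1) = b * (b + 2) + 1 := by ring
        omega
      have hbd : b ∣ 2 ^ δ := Dvd.intro _ (hfac.symm)
      have hbd2 : b + 2 ∣ 2 ^ δ := ⟨b, by rw [hfac]; ring⟩
      obtain ⟨i, _, hi⟩ := (Nat.dvd_prime_pow Nat.prime_two).mp hbd
      obtain ⟨j, _, hj⟩ := (Nat.dvd_prime_pow Nat.prime_two).mp hbd2
      have hi2 : 2 ≤ i := by
        by_contra h
        interval_cases i <;> omega
      have hj2 : 2 ≤ j := by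
        by_contra h
        interval_cases j <;> omega
      have d1 : (4:ℕ) ∣ b := by
        rw [hi]
        have : (2:ℕ) ^ 2 ∣ 2 ^ i := pow_dvd_pow 2 hi2
        simpa using this
      have d2 : (4:ℕ) ∣ b + 2 := by
        rw [hj]
        have : (2:ℕ) ^ 2 ∣ 2 ^ j := pow_dvd_pow 2 hj2
        simpa using this
      omega
    · -- odd case: n + 3 = 2 * j + 1
      obtain ⟨j, hj⟩ := ho
      have h9 : (8:ℕ) ∣ 9 ^ j - 1 := by
        have := Nat.sub_dvd_pow_sub_pow 9 1 j
        simpa using this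
      have h9' : 1 ≤ (9:ℕ) ^ j := Nat.one_le_pow _ _ (by norm_num)
      have h3k : 3 ^ (n + 3) = 3 * 9 ^ j := by
        rw [hj, pow_succ, pow_mul]
        norm_num
        ring
      rw [h3k] at h8'
      omega
end
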